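/- arXiv:1203.2365 — 2 statements merged into one kernel-verified Lean document; each statement's English description precedes it below -/
import Mathlib

section
/- Define Q(n,p) := 3^n * (2p)! * (2n+p-1)! / (p! * (p-1)! * n! * (n+p+1)!). Then for all n ≥ 0 and p ≥ 1, Q(n,p) is a positive integer. -/
/-- `Q n p = 3^n (2p)! (2n+p-1)! / (p! (p-1)! n! (n+p+1)!)`, the number of rooted
quadrangulations with a boundary having `n` internal faces and boundary length `2p`. -/
noncomputable def Q (n p : ℕ) : ℚ :=
  3 ^ n * (Nat.factorial (2 * p) : ℚ) * (Nat.factorial (2 * n + p - 1) : ℚ) /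
    ((Nat.factorial p : ℚ) * (Nat.factorial (p - 1) : ℚ) * (Nat.factorial n : ℚ) *
      (Nat.factorial (n + p + 1) : ℚ))

/-!
By Legendre's formula it suffices to show, for every prime power `m = q ^ i`, that
`⌊p/m⌋ + ⌊(p-1)/m⌋ + ⌊n/m⌋ + ⌊(n+p+1)/m⌋ ≤ ⌊2p/m⌋ + ⌊(2n+p-1)/m⌋`.
Writing `p - 1 = u + m a` and `n = v + m c` with `u, v < m`, the integer parts cancel and
what is left is an inequality between residues. It holds for every `m ≥ 2` except `m = 3`,
where it fails by one exactly when `p ≡ 1` and `n ≡ 1 (mod 3)`; then `n ≥ 1` and the factor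
`3 ^ n` supplies the missing power of `3`.
-/

open Finset Nat

lemma div_eq_zero_or_one_or_two {x m : ℕ} (hx : x < 3 * m) :
    (x / m = 0 ∧ x < m) ∨ (x / m = 1 ∧ m ≤ x ∧ x < 2 * m) ∨ (x / m = 2 ∧ 2 * m ≤ x) := by
  rcases Nat.lt_or_ge x m with h1 | h1
  · exact Or.inl ⟨Nat.div_eq_of_lt h1, h1⟩
  rcases Nat.lt_or_ge x (2 * m) with h2 | h2
  · exact Or.inr (Or.inl ⟨Nat.div_eq_of_lt_le (by omega) (by omega), h1, h2⟩)
  · exact Or.inr (Or.inr ⟨Nat.div_eq_of_lt_le (by omega) (by omega), h2⟩)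

lemma residue_div_add_div_le {m u v : ℕ} (hm : 2 ≤ m) (hm3 : m ≠ 3) (hu : u < m) (hv : v < m) :
    (u + 1) / m + (u + v + 2) / m ≤ (2 * u + 2) / m + (2 * v + u) / m := by
  rcases div_eq_zero_or_one_or_two (x := u + 1) (m := m) (by omega) with h1 | h1 | h1 <;>
  rcases div_eq_zero_or_one_or_two (x := u + v + 2) (m := m) (by omega) with h2 | h2 | h2 <;>
  rcases div_eq_zero_or_one_or_two (x := 2 * u + 2) (m := m) (by omega) with h3 | h3 | h3 <;>
  rcases div_eq_zero_or_one_or_two (x := 2 * v + u) (m := m) (by omega) with h4 | h4 | h4 <;>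
  omega

lemma div_add_div_le_of_ne_three {m n p : ℕ} (hm : 2 ≤ m) (hm3 : m ≠ 3) (hp : 1 ≤ p) :
    p / m + (p - 1) / m + n / m + (n + p + 1) / m ≤ 2 * p / m + (2 * n + p - 1) / m := by
  have hm0 : 0 < m := by omega
  obtain ⟨P, rfl⟩ : ∃ P, p = P + 1 := ⟨p - 1, by omega⟩
  obtain ⟨a, u, hu, rfl⟩ : ∃ a u, u < m ∧ P = u + m * a :=
    ⟨P / m, P % m, Nat.mod_lt _ hm0, (Nat.mod_add_div P m).symm⟩
  obtain ⟨c, v, hv, rfl⟩ : ∃ c v, v < m ∧ n = v + m * c :=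
    ⟨n / m, n % m, Nat.mod_lt _ hm0, (Nat.mod_add_div n m).symm⟩
  have key := residue_div_add_div_le hm hm3 hu hv
  have hdiv : ∀ x k, (x + m * k) / m = x / m + k := fun x k => Nat.add_mul_div_left x k hm0
  have q1 : (u + m * a + 1) / m = (u + 1) / m + a := by
    rw [show u + m * a + 1 = (u + 1) + m * a by ring, hdiv]
  have q2 : (v + m * c + (u + m * a + 1) + 1) / m = (u + v + 2) / m + (a + c) := by
    rw [show v + m * c + (u + m * a + 1) + 1 = (u + v + 2) + m * (a + c) by ring, hdiv]
  have q3 : 2 * (u + m * a + 1) / m = (2 * u + 2) / m + 2 * a := by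
    rw [show 2 * (u + m * a + 1) = (2 * u + 2) + m * (2 * a) by ring, hdiv]
  have q4 : (2 * (v + m * c) + (u + m * a + 1) - 1) / m = (2 * v + u) / m + (2 * c + a) := by
    rw [show 2 * (v + m * c) + (u + m * a + 1) - 1 = (2 * v + u) + m * (2 * c + a) by
      rw [Nat.sub_eq_iff_eq_add (by omega)]; ring, hdiv]
  rw [q1, q2, q3, q4, Nat.add_sub_cancel, hdiv, hdiv, Nat.div_eq_of_lt hu, Nat.div_eq_of_lt hv]
  omega

lemma div_three_add_div_three_le (n p : ℕ) (hp : 1 ≤ p) :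
    p / 3 + (p - 1) / 3 + n / 3 + (n + p + 1) / 3 ≤ n + (2 * p / 3 + (2 * n + p - 1) / 3) := by
  obtain ⟨a, r, hr, rfl⟩ : ∃ a r, r < 3 ∧ p = r + 3 * a := ⟨p / 3, p % 3, by omega, by omega⟩
  obtain ⟨c, t, ht, rfl⟩ : ∃ c t, t < 3 ∧ n = t + 3 * c := ⟨n / 3, n % 3, by omega, by omega⟩
  interval_cases r <;> interval_cases t <;> omega

lemma sum_div_pow_le {q : ℕ} (hq : q.Prime) {n p b : ℕ} (hb : 2 ≤ b) (hp : 1 ≤ p) :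
    ∑ i ∈ Ico 1 b, (p / q ^ i + (p - 1) / q ^ i + n / q ^ i + (n + p + 1) / q ^ i)
      ≤ (if 3 = q then n else 0)
        + ∑ i ∈ Ico 1 b, (2 * p / q ^ i + (2 * n + p - 1) / q ^ i) := by
  have termwise : ∀ i ∈ Ico 1 b, q ^ i ≠ 3 →
      p / q ^ i + (p - 1) / q ^ i + n / q ^ i + (n + p + 1) / q ^ i
        ≤ 2 * p / q ^ i + (2 * n + p - 1) / q ^ i := fun i hi h3 =>
    div_add_div_le_of_ne_three (hq.two_le.trans (Nat.le_self_pow (by grind) q)) h3 hp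
  split_ifs with h3
  · subst h3
    rw [sum_eq_sum_Ico_succ_bot hb, sum_eq_sum_Ico_succ_bot hb]
    have first := div_three_add_div_three_le n p hp
    have rest : ∑ i ∈ Ico (1 + 1) b, _ ≤ ∑ i ∈ Ico (1 + 1) b, _ :=
      sum_le_sum fun i hi => termwise i (Ico_subset_Ico_left (by omega) hi)
        (Nat.ne_of_gt (calc 3 < 3 ^ 2 := by norm_num
          _ ≤ 3 ^ i := Nat.pow_le_pow_right (by norm_num) (mem_Ico.mp hi).1))
    simp only [pow_one]
    omega
  · rw [zero_add]
    exact sum_le_sum fun i hi => termwise i hi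
      fun h => h3 ((Nat.prime_three.pow_eq_iff.mp h).1.symm)

lemma factorization_Q_denominator_le {q : ℕ} (hq : q.Prime) {n p : ℕ} (hp : 1 ≤ p) :
    (p ! * (p - 1)! * n ! * (n + p + 1)!).factorization q
      ≤ (3 ^ n * (2 * p)! * (2 * n + p - 1)!).factorization q := by
  have legendre : ∀ x ≤ 2 * n + 2 * p + 1,
      (x)!.factorization q = ∑ i ∈ Ico 1 (2 * n + 2 * p + 2), x / q ^ i := fun x hx =>
    factorization_factorial hq ((log_le_self q x).trans_lt (by omega))
  simp (disch := positivity) only [Nat.factorization_mul, Finsupp.add_apply,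
    Nat.prime_three.factorization_pow, Finsupp.single_apply]
  rw [legendre p (by omega), legendre (p - 1) (by omega), legendre n (by omega),
    legendre (n + p + 1) (by omega), legendre (2 * p) (by omega),
    legendre (2 * n + p - 1) (by omega), ← sum_add_distrib, ← sum_add_distrib,
    ← sum_add_distrib, add_assoc (if 3 = q then n else 0), ← sum_add_distrib]
  exact sum_div_pow_le hq (by omega) hp

lemma Q_denominator_dvd_numerator {n p : ℕ} (hp : 1 ≤ p) :
    p ! * (p - 1)! * n ! * (n + p + 1)! ∣ 3 ^ n * (2 * p)! * (2 * n + p - 1)! :=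
  (factorization_prime_le_iff_dvd (by positivity) (by positivity)).mp
    fun _ hq => factorization_Q_denominator_le hq hp

/--  is a positive integer. -/
theorem Q_pos_integer (n p : ℕ) (hp : 1 ≤ p) :
    ∃ k : ℕ, 0 < k ∧ Q n p = (k : ℚ) := by
  obtain ⟨k, hk⟩ := Q_denominator_dvd_numerator (n := n) hp
  have hk0 : k ≠ 0 := by
    rintro rfl
    exact (by positivity : 3 ^ n * (2 * p)! * (2 * n + p - 1)! ≠ 0) (by simpa using hk)
  refine ⟨k, Nat.pos_of_ne_zero hk0, ?_⟩
  have hkq : ((3 ^ n * (2 * p)! * (2 * n + p - 1)! : ℕ) : ℚ)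
      = (p ! * (p - 1)! * n ! * (n + p + 1)! : ℕ) * k := by rw [hk]; push_cast; ring
  push_cast at hkq
  rw [Q, hkq]
  field_simp
end

section
/- For any sequence of length 2n+p with steps in {-1, +1} and sum -p, where p ≥ 1, exactly p of the 2n+p cyclic shifts have all partial sums of proper prefixes greater than -p (equivalently, first hit -p only at the end). -/
/-- The cycle lemma (Dvoretzky–Motzkin): given a sequence of `2n + p` steps in `{+1, -1}`
with total sum `-p` (`p ≥ 1`), exactly `p` of its `2n + p` cyclic shifts are such that
every proper partial sum is strictly greater than `-p`. -/
theorem cycle_lemma (n p : ℕ) (hp : 1 ≤ p) (s : Fin (2 * n + p) → ℤ)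
    (hs : ∀ i, s i = 1 ∨ s i = -1) (hsum : ∑ i, s i = -(p : ℤ)) :
    Set.ncard {r : Fin (2 * n + p) |
        ∀ k, 0 < k → k < 2 * n + p →
          -(p : ℤ) < ∑ i ∈ Finset.range k,
            s ⟨(r.val + i) % (2 * n + p), Nat.mod_lt _ (by omega)⟩} = p := by
  have hN0 : 0 < 2 * n + p := by omega
  set t : ℕ → ℤ := fun i => s ⟨i % (2 * n + p), Nat.mod_lt _ hN0⟩ with ht
  set S : ℕ → ℤ := fun m => ∑ i ∈ Finset.range m, t i with hSdef
  have hS0 : S 0 = 0 := by simp [hSdef]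
  have hSsucc : ∀ m, S (m + 1) = S m + t m := by
    intro m; simp [hSdef, Finset.sum_range_succ]
  have htper : ∀ i, t (i + (2 * n + p)) = t i := by
    intro i; simp [ht, Nat.add_mod_right]
  have ht1 : ∀ i, t i = 1 ∨ t i = -1 := fun i => hs _
  -- sum over one period
  have hSN : S (2 * n + p) = -(p : ℤ) := by
    rw [← hsum]
    show ∑ i ∈ Finset.range (2 * n + p), t i = ∑ i, s i
    rw [← Fin.sum_univ_eq_sum_range (fun i => t i) (2 * n + p)]
    refine Finset.sum_congr rfl fun i _ => ?_
    simp [ht, Nat.mod_eq_of_lt i.isLt]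
  -- periodicity of S
  have hper : ∀ m, S (m + (2 * n + p)) = S m - (p : ℤ) := by
    intro m
    induction m with
    | zero => simpa [hS0] using hSN
    | succ m ih =>
      have h1 : m + 1 + (2 * n + p) = m + (2 * n + p) + 1 := by omega
      rw [h1, hSsucc, hSsucc, htper, ih]; ring
  -- shifted partial sums
  have hshift : ∀ a k, ∑ i ∈ Finset.range k, t (a + i) = S (a + k) - S a := by
    intro a k
    induction k with
    | zero => simp
    | succ k ih =>
      rw [Finset.sum_range_succ, ih, ← Nat.add_assoc, hSsucc]; ring
  -- step bound
  have hstep : ∀ m, S m - 1 ≤ S (m + 1) := by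
    intro m
    rcases ht1 m with h | h <;> rw [hSsucc, h] <;> omega
  -- discrete IVT (downward)
  have hIVT : ∀ d a (v : ℤ), S (a + d) ≤ v → v ≤ S a → ∃ m, m ≤ d ∧ S (a + m) = v := by
    intro d
    induction d with
    | zero => intro a v h1 h2; exact ⟨0, le_refl 0, le_antisymm h1 h2⟩
    | succ d ih =>
      intro a v h1 h2
      by_cases h : S a = v
      · exact ⟨0, Nat.zero_le _, h⟩
      · have hv : v ≤ S (a + 1) := by
          have := hstep a
          omega
        have h1' : S (a + 1 + d) ≤ v := by
          have he : a + 1 + d = a + (d + 1) := by omega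
          rwa [he]
        obtain ⟨m, hm, hSm⟩ := ih (a + 1) v h1' hv
        exact ⟨m + 1, by omega, by rwa [show a + (m + 1) = a + 1 + m by omega]⟩
  -- minimum over range N
  obtain ⟨m₁, hm₁mem, hm₁min⟩ :=
    Finset.exists_min_image (Finset.range (2 * n + p)) S ⟨0, Finset.mem_range.2 hN0⟩
  have hm₁N : m₁ < 2 * n + p := Finset.mem_range.1 hm₁mem
  have hμ₁le : ∀ m, m < 2 * n + p → S m₁ ≤ S m := fun m hm => hm₁min m (Finset.mem_range.2 hm)
  -- minimum over range 2N
  obtain ⟨m₂, hm₂mem, hm₂min⟩ :=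
    Finset.exists_min_image (Finset.range (2 * (2 * n + p))) S ⟨0, Finset.mem_range.2 (by omega)⟩
  have hm₂N : m₂ < 2 * (2 * n + p) := Finset.mem_range.1 hm₂mem
  have hμ₂le : ∀ m, m < 2 * (2 * n + p) → S m₂ ≤ S m :=
    fun m hm => hm₂min m (Finset.mem_range.2 hm)
  have hp' : (0 : ℤ) < p := by exact_mod_cast hp
  -- μ₂ = μ₁ - p
  have hμeq : S m₂ = S m₁ - (p : ℤ) := by
    have hle : S m₂ ≤ S m₁ - (p : ℤ) := by
      rw [← hper m₁]; exact hμ₂le _ (by omega)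
    have hge : S m₁ - (p : ℤ) ≤ S m₂ := by
      rcases Nat.lt_or_ge m₂ (2 * n + p) with h | h
      · have := hμ₁le m₂ h
        omega
      · have h2 : m₂ = (m₂ - (2 * n + p)) + (2 * n + p) := by omega
        rw [h2, hper]
        have := hμ₁le (m₂ - (2 * n + p)) (by omega)
        omega
    omega
  -- the statement's condition, rephrased
  have hcond : ∀ r : Fin (2 * n + p),
      (∀ k, 0 < k → k < 2 * n + p →
          -(p : ℤ) < ∑ i ∈ Finset.range k,
            s ⟨(r.val + i) % (2 * n + p), Nat.mod_lt _ (by omega)⟩)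
        ↔ (∀ j, j < r.val + (2 * n + p) → S (r.val + (2 * n + p)) < S j) := by
    intro r
    have hsum_eq : ∀ k, (∑ i ∈ Finset.range k,
        s ⟨(r.val + i) % (2 * n + p), Nat.mod_lt _ (by omega)⟩) = S (r.val + k) - S r.val := by
      intro k
      rw [← hshift]
    constructor
    · intro hgood j hj
      have key : ∀ j, r.val ≤ j → j < r.val + (2 * n + p) →
          S (r.val + (2 * n + p)) < S j := by
        intro j hj1 hj2
        rcases Nat.eq_or_lt_of_le hj1 with h | h
        · rw [← h, hper]
          omega
        · have hk := hgood (j - r.val) (by omega) (by omega)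
          rw [hsum_eq] at hk
          rw [show r.val + (j - r.val) = j by omega] at hk
          rw [hper]
          omega
      rcases Nat.lt_or_ge j r.val with h | h
      · have h2 := key (j + (2 * n + p)) (by omega) (by omega)
        rw [hper j] at h2
        omega
      · exact key j h hj
    · intro hrec k hk1 hk2
      rw [hsum_eq]
      have := hrec (r.val + k) (by omega)
      rw [hper] at this
      omega
  -- the good set
  set A : Set (Fin (2 * n + p)) := {r : Fin (2 * n + p) |
        ∀ k, 0 < k → k < 2 * n + p →
          -(p : ℤ) < ∑ i ∈ Finset.range k,
            s ⟨(r.val + i) % (2 * n + p), Nat.mod_lt _ (by omega)⟩} with hA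
  set B : Set ℤ := ↑(Finset.Ico (S m₂) (S m₁)) with hB
  have hbij : Set.BijOn (fun r : Fin (2 * n + p) => S (r.val + (2 * n + p))) A B := by
    refine ⟨?_, ?_, ?_⟩
    · intro r hr
      have hrec := (hcond r).1 hr
      simp only [hB, Finset.coe_Ico, Set.mem_Ico]
      constructor
      · exact hμ₂le _ (by omega)
      · exact hrec m₁ (by omega)
    · intro r hr r' hr' heq
      have hrec := (hcond r).1 hr
      have hrec' := (hcond r').1 hr'
      by_contra hne
      have hvne : r.val ≠ r'.val := fun h => hne (Fin.ext h)
      rcases Nat.lt_or_ge r.val r'.val with h | h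
      · have := hrec' (r.val + (2 * n + p)) (by omega)
        simp only at heq
        omega
      · have := hrec (r'.val + (2 * n + p)) (by omega)
        simp only at heq
        omega
    · intro w hw
      simp only [hB, Finset.coe_Ico, Set.mem_Ico] at hw
      obtain ⟨hw2, hw1⟩ := hw
      have hw0 : w ≤ S 0 := by
        have := hμ₁le 0 hN0
        omega
      -- first hitting time of w
      have hex : ∃ m, S m = w := by
        obtain ⟨m, _, hm⟩ := hIVT m₂ 0 w (by simpa using hw2) (by simpa using hw0)
        exact ⟨m, by simpa using hm⟩
      have hSm₀ : S (Nat.find hex) = w := Nat.find_spec hex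
      have hmin : ∀ j, j < Nat.find hex → S j ≠ w := fun j hj => Nat.find_min hex hj
      have hm₀lt : Nat.find hex < 2 * (2 * n + p) := by
        obtain ⟨m, hm, hSm⟩ := hIVT m₂ 0 w (by simpa using hw2) (by simpa using hw0)
        have : Nat.find hex ≤ m := Nat.find_le (by simpa using hSm)
        omega
      have hm₀ge : 2 * n + p ≤ Nat.find hex := by
        by_contra h
        have := hμ₁le (Nat.find hex) (by omega)
        omega
      have hrec : ∀ j, j < Nat.find hex → S (Nat.find hex) < S j := by
        intro j hj
        by_contra hle
        push_neg at hle
        have hne := hmin j hj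
        have hlt : S j < w := by rw [hSm₀] at hle; omega
        obtain ⟨m', hm', hSm'⟩ := hIVT j 0 w (by simpa using hlt.le) (by simpa using hw0)
        simp only [Nat.zero_add] at hSm'
        have : Nat.find hex ≤ m' := Nat.find_le hSm'
        omega
      refine ⟨⟨Nat.find hex - (2 * n + p), by omega⟩, ?_, ?_⟩
      · show _ ∈ A
        rw [hA]
        refine Set.mem_setOf.2 ((hcond _).2 ?_)
        simpa [show Nat.find hex - (2 * n + p) + (2 * n + p) = Nat.find hex by omega] using hrec
      · simp only
        rw [show Nat.find hex - (2 * n + p) + (2 * n + p) = Nat.find hex by omega]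
        exact hSm₀
  have hAcard : A.ncard = (Finset.Ico (S m₂) (S m₁)).card := by
    have h1 : A.ncard = ((fun r : Fin (2 * n + p) => S (r.val + (2 * n + p))) '' A).ncard :=
      (Set.ncard_image_of_injOn hbij.injOn).symm
    rw [h1, hbij.image_eq, hB, Set.ncard_coe_finset]
  rw [hAcard, Int.card_Ico, hμeq]
  simp
end
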